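/- arXiv:2604.19843 — 2 statements merged into one kernel-verified Lean document; each statement's English description precedes it below -/
import Mathlib

section
/- Let n ≥ 1, let x₀ ∈ ℝⁿ, and let ν ∈ ℝⁿ be a unit vector. Suppose d : ℝⁿ → ℝ and 𝒩 : ℝⁿ → ℝ are twice continuously differentiable near x₀, h : ℝⁿ → ℝ is differentiable at x₀, d(x₀) = 0, and ∇d(x₀) = ν. Then the shielded envelope ℰ(x) = 𝒩(x) − d(x)·( ⟨∇𝒩(x), ∇d(x)⟩ − h(x) ) is differentiable at x₀ and satisfies ⟨∇ℰ(x₀), ν⟩ = h(x₀). -/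
/-!
Because `d x₀ = 0`, the product rule leaves no trace of the derivative of the correction factor
at `x₀`: the differential of the envelope there is `D𝒩 − (⟪∇𝒩, ∇d⟫ − h) Dd`. Evaluated at
`ν = ∇d(x₀)`, where `Dd ν = ‖ν‖² = 1`, this is `⟪∇𝒩, ν⟫ − (⟪∇𝒩, ν⟫ − h) = h`.
-/

open scoped RealInnerProductSpace

theorem ContDiffAt.differentiableAt_gradient {F : Type*} [NormedAddCommGroup F]
    [InnerProductSpace ℝ F] [CompleteSpace F] {f : F → ℝ} {x : F} {n : WithTop ℕ∞}
    (hf : ContDiffAt ℝ n f x) (hn : 2 ≤ n) : DifferentiableAt ℝ (gradient f) x :=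
  (InnerProductSpace.toDual ℝ F).symm.toContinuousLinearEquiv.differentiableAt.comp x
    ((hf.fderiv_right (m := 1) hn).differentiableAt one_ne_zero)

theorem fderiv_sub_mul_of_eq_zero {E : Type*} [NormedAddCommGroup E] [NormedSpace ℝ E]
    {N d g : E → ℝ} {x : E} (hN : DifferentiableAt ℝ N x) (hd : DifferentiableAt ℝ d x)
    (hg : DifferentiableAt ℝ g x) (hd0 : d x = 0) :
    fderiv ℝ (fun y => N y - d y * g y) x = fderiv ℝ N x - g x • fderiv ℝ d x := by
  rw [fderiv_fun_sub hN (hd.fun_mul hg), fderiv_fun_mul hd hg, hd0, zero_smul, zero_add]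

theorem stmt_11_general (n : ℕ) (x₀ ν : EuclideanSpace ℝ (Fin n))
    (hν : ‖ν‖ = 1) (d 𝒩 h : EuclideanSpace ℝ (Fin n) → ℝ)
    (hd : ContDiffAt ℝ 2 d x₀) (hN : ContDiffAt ℝ 2 𝒩 x₀)
    (hh : DifferentiableAt ℝ h x₀) (hd0 : d x₀ = 0) (hdgrad : gradient d x₀ = ν) :
    DifferentiableAt ℝ
      (fun x => 𝒩 x - d x * (⟪gradient 𝒩 x, gradient d x⟫ - h x)) x₀ ∧
    ⟪gradient (fun x => 𝒩 x - d x * (⟪gradient 𝒩 x, gradient d x⟫ - h x)) x₀, ν⟫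
      = h x₀ := by
  have hdD : DifferentiableAt ℝ d x₀ := hd.differentiableAt two_ne_zero
  have hND : DifferentiableAt ℝ 𝒩 x₀ := hN.differentiableAt two_ne_zero
  have hg : DifferentiableAt ℝ (fun x => ⟪gradient 𝒩 x, gradient d x⟫ - h x) x₀ :=
    ((hN.differentiableAt_gradient le_rfl).inner ℝ (hd.differentiableAt_gradient le_rfl)).sub hh
  have hdν : fderiv ℝ d x₀ ν = 1 := by
    rw [← inner_gradient_left, hdgrad, real_inner_self_eq_norm_sq, hν, one_pow]
  refine ⟨hND.sub (hdD.mul hg), ?_⟩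
  rw [inner_gradient_left, fderiv_sub_mul_of_eq_zero hND hdD hg hd0]
  simp only [sub_apply, smul_apply, smul_eq_mul, hdν, hdgrad, ← inner_gradient_left]
  ring

/-- Hard constraint for Neumann boundary conditions (envelope level): if `d` and `𝒩`
are twice continuously differentiable near `x₀`, `h` is differentiable at `x₀`,
`d(x₀) = 0` and `∇d(x₀) = ν` is a unit vector, then the shielded envelope
`ℰ(x) = 𝒩(x) − d(x)·(⟨∇𝒩(x), ∇d(x)⟩ − h(x))` is differentiable at `x₀` and
`⟨∇ℰ(x₀), ν⟩ = h(x₀)`. -/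
theorem stmt_11 (n : ℕ) (hn : 1 ≤ n) (x₀ ν : EuclideanSpace ℝ (Fin n))
    (hν : ‖ν‖ = 1) (d 𝒩 h : EuclideanSpace ℝ (Fin n) → ℝ)
    (hd : ContDiffAt ℝ 2 d x₀) (hN : ContDiffAt ℝ 2 𝒩 x₀)
    (hh : DifferentiableAt ℝ h x₀) (hd0 : d x₀ = 0) (hdgrad : gradient d x₀ = ν) :
    DifferentiableAt ℝ
      (fun x => 𝒩 x - d x * (⟪gradient 𝒩 x, gradient d x⟫ - h x)) x₀ ∧
    ⟪gradient (fun x => 𝒩 x - d x * (⟪gradient 𝒩 x, gradient d x⟫ - h x)) x₀, ν⟫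
      = h x₀ :=
  stmt_11_general n x₀ ν hν d 𝒩 h hd hN hh hd0 hdgrad
end

section
/- Let n ≥ 1, let x₀ ∈ ℝⁿ, and let ν ∈ ℝⁿ be a unit vector. Suppose d : ℝⁿ → ℝ, 𝒩 : ℝⁿ → ℝ, Φ : ℝⁿ → ℝ, and g_N : ℝⁿ → ℝ are twice continuously differentiable near x₀, that Φ is nonvanishing near x₀, d(x₀) = 0, and ∇d(x₀) = ν. Define h(x) = ( g_N(x) − 𝒩(x)·⟨∇Φ(x), ∇d(x)⟩ )/Φ(x), the shielded envelope ℰ(x) = 𝒩(x) − d(x)·( ⟨∇𝒩(x), ∇d(x)⟩ − h(x) ), and the predicted field û(x) = Φ(x)·ℰ(x). Then û is differentiable at x₀ and its normal derivative satisfies ⟨∇û(x₀), ν⟩ = g_N(x₀), i.e. the Neumann boundary condition holds exactly at x₀. -/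
/-!
Since `d x₀ = 0`, the correction `d · q` (with `q = ⟨∇𝒩, ∇d⟩ - h`) vanishes at `x₀` and contributes
only `q(x₀) ∇d(x₀)` to the gradient there. Hence, with `∇d(x₀) = ν` a unit vector,
`⟨∇û(x₀), ν⟩ = 𝒩 ⟨∇Φ, ν⟩ + Φ (⟨∇𝒩, ν⟩ - q) = 𝒩 ⟨∇Φ, ν⟩ + Φ h = g_N` at `x₀`.
-/

open scoped RealInnerProductSpace

theorem HasFDerivAt.sub_mul_of_eq_zero {E : Type*} [NormedAddCommGroup E] [NormedSpace ℝ E]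
    {N d q : E → ℝ} {N' d' : StrongDual ℝ E} {x : E} (hN : HasFDerivAt N N' x)
    (hd : HasFDerivAt d d' x) (hq : DifferentiableAt ℝ q x) (hd0 : d x = 0) :
    HasFDerivAt (fun y => N y - d y * q y) (N' - q x • d') x := by
  have := hN.sub (hd.mul hq.hasFDerivAt)
  rwa [hd0, zero_smul, zero_add] at this

theorem stmt_12_general (n : ℕ) (x₀ ν : EuclideanSpace ℝ (Fin n))
    (hν : ‖ν‖ = 1) (d 𝒩 Φ gN : EuclideanSpace ℝ (Fin n) → ℝ)
    (hd : ContDiffAt ℝ 2 d x₀) (hN : ContDiffAt ℝ 2 𝒩 x₀)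
    (hΦ : ContDiffAt ℝ 2 Φ x₀) (hgN : ContDiffAt ℝ 2 gN x₀)
    (hΦ0 : ∀ᶠ x in nhds x₀, Φ x ≠ 0)
    (hd0 : d x₀ = 0) (hdgrad : gradient d x₀ = ν) :
    DifferentiableAt ℝ
      (fun x => Φ x *
        (𝒩 x - d x * (⟪gradient 𝒩 x, gradient d x⟫ -
          (gN x - 𝒩 x * ⟪gradient Φ x, gradient d x⟫) / Φ x))) x₀ ∧
    ⟪gradient (fun x => Φ x *
        (𝒩 x - d x * (⟪gradient 𝒩 x, gradient d x⟫ -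
          (gN x - 𝒩 x * ⟪gradient Φ x, gradient d x⟫) / Φ x))) x₀, ν⟫
      = gN x₀ := by
  have hΦx₀ : Φ x₀ ≠ 0 := hΦ0.self_of_nhds
  have hd' := hd.differentiableAt two_ne_zero
  have hN' := hN.differentiableAt two_ne_zero
  have hΦ' := hΦ.differentiableAt two_ne_zero
  have hgrad_d := hd.differentiableAt_gradient le_rfl
  have hNd := (hN.differentiableAt_gradient le_rfl).inner ℝ hgrad_d
  have hΦd := (hΦ.differentiableAt_gradient le_rfl).inner ℝ hgrad_d
  have hgN' := hgN.differentiableAt two_ne_zero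
  have hq : DifferentiableAt ℝ (fun x => ⟪gradient 𝒩 x, gradient d x⟫ -
      (gN x - 𝒩 x * ⟪gradient Φ x, gradient d x⟫) / Φ x) x₀ := by
    fun_prop (disch := assumption)
  have hû := hΦ'.hasFDerivAt.fun_mul (hN'.hasFDerivAt.sub_mul_of_eq_zero hd'.hasFDerivAt hq hd0)
  refine ⟨hû.differentiableAt, ?_⟩
  have hdν : fderiv ℝ d x₀ ν = 1 := by
    rw [← inner_gradient_left, hdgrad, real_inner_self_eq_norm_sq, hν, one_pow]
  rw [inner_gradient_left, hû.fderiv]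
  simp only [add_apply, smul_apply, sub_apply, smul_eq_mul, hdν, hd0, hdgrad, ← inner_gradient_left]
  field_simp
  ring

/-- Hard constraint for Neumann boundary conditions (field level): with
`h(x) = (g_N(x) − 𝒩(x)·⟨∇Φ(x), ∇d(x)⟩)/Φ(x)`, the shielded envelope
`ℰ(x) = 𝒩(x) − d(x)·(⟨∇𝒩(x), ∇d(x)⟩ − h(x))` and the predicted field
`û = Φ·ℰ`, if `d(x₀) = 0` and `∇d(x₀) = ν` is a unit vector, `Φ` is nonvanishing
near `x₀`, and `d, 𝒩, Φ, g_N` are twice continuously differentiable near `x₀`, then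
`û` is differentiable at `x₀` and `⟨∇û(x₀), ν⟩ = g_N(x₀)`. -/
theorem stmt_12 (n : ℕ) (hn : 1 ≤ n) (x₀ ν : EuclideanSpace ℝ (Fin n))
    (hν : ‖ν‖ = 1) (d 𝒩 Φ gN : EuclideanSpace ℝ (Fin n) → ℝ)
    (hd : ContDiffAt ℝ 2 d x₀) (hN : ContDiffAt ℝ 2 𝒩 x₀)
    (hΦ : ContDiffAt ℝ 2 Φ x₀) (hgN : ContDiffAt ℝ 2 gN x₀)
    (hΦ0 : ∀ᶠ x in nhds x₀, Φ x ≠ 0)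
    (hd0 : d x₀ = 0) (hdgrad : gradient d x₀ = ν) :
    DifferentiableAt ℝ
      (fun x => Φ x *
        (𝒩 x - d x * (⟪gradient 𝒩 x, gradient d x⟫ -
          (gN x - 𝒩 x * ⟪gradient Φ x, gradient d x⟫) / Φ x))) x₀ ∧
    ⟪gradient (fun x => Φ x *
        (𝒩 x - d x * (⟪gradient 𝒩 x, gradient d x⟫ -
          (gN x - 𝒩 x * ⟪gradient Φ x, gradient d x⟫) / Φ x))) x₀, ν⟫
      = gN x₀ :=
  stmt_12_general n x₀ ν hν d 𝒩 Φ gN hd hN hΦ hgN hΦ0 hd0 hdgrad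
end
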